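/- For every integer p, the family indexed by q ∈ ℤ⁴ given by q ↦ (1/2)·(1/A_p(q) + 1/A_p(−q)) − 1/A_0(q) + 2p²/A_0(q)² − 4p²·S(q)²/A_0(q)³ is summable. (After the symmetrization q ↦ −q and the subtraction of the mass counterterm 1/A_0(q) and of the wave-function counterterms 2p²/A_0(q)² and 4p²S(q)²/A_0(q)³, the one-loop melonic self-energy is ultraviolet finite; this is the one-loop content of the renormalized two-point closed equation with renormalization conditions at zero momentum.) -/

import Mathlib

open scoped BigOperators

/-- The gauge-constrained propagator denominator: `A m p q = |q⃗|² + m²` for a momentum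
`q⃗ ∈ ℤ⁶` with one component fixed to `p`, four free components `q`, and the last component
`-(p + S q)` determined by the closure constraint. -/
noncomputable def A (m : ℝ) (p : ℤ) (q : Fin 4 → ℤ) : ℝ :=
  (p : ℝ) ^ 2 + (∑ i, ((q i : ℝ)) ^ 2) + ((p : ℝ) + ∑ i, (q i : ℝ)) ^ 2 + m ^ 2

/-!
Write `a = A₀(q)`, `u = p S(q)` and `v = 2p²`, so that `A_p(±q) = a ± 2u + v`. The counterterms
are exactly the expansion of `(1/2)(1/(a + 2u + v) + 1/(a - 2u + v))` to first order in `v` and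
second order in `u`; since `u² ≤ p² a`, the remainder is `O(v²/a³)`. Finally
`A₀(q) ≥ min(1, m²)(1 + |q|²)`, and `∑_{q ∈ ℤ⁴} (1 + |q|²)⁻³` converges because `2 · 3 > 4`:
bound `(1 + |q|²)⁻ᵏ` by the product `∏ᵢ (1 + qᵢ²)^(-k/n)` of one-dimensional summable factors.
-/

open Finset

lemma summable_int_sq_add_one_rpow_neg {r : ℝ} (hr : 1 / 2 < r) :
    Summable fun k : ℤ => ((k : ℝ) ^ 2 + 1) ^ (-r) := by
  refine (Real.summable_abs_int_rpow (b := 2 * r) (by linarith)).of_norm_bounded_eventually ?_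
  filter_upwards [Filter.eventually_cofinite_ne 0] with k hk
  have hk₀ : (0 : ℝ) < (k : ℝ) ^ 2 := by positivity
  rw [Real.norm_of_nonneg (by positivity), neg_mul_eq_mul_neg, Real.rpow_mul (abs_nonneg _),
    Real.rpow_two, sq_abs]
  exact Real.rpow_le_rpow_of_nonpos hk₀ (by linarith) (by linarith)

lemma summable_fin_prod_of_nonneg {β : Type*} {f : β → ℝ} (hf₀ : 0 ≤ f)
    (hf : Summable f) (n : ℕ) : Summable fun x : Fin n → β => ∏ i, f (x i) := by
  induction n with
  | zero => exact Summable.of_finite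
  | succ n ih =>
    have hprod : Summable fun y : β × (Fin n → β) => f y.1 * ∏ i, f (y.2 i) :=
      hf.mul_of_nonneg (g := fun x : Fin n → β => ∏ i, f (x i)) ih hf₀ fun _ =>
        prod_nonneg fun _ _ => hf₀ _
    refine (((Fin.consEquiv fun _ => β).symm.summable_iff
      (f := fun y : β × (Fin n → β) => f y.1 * ∏ i, f (y.2 i))).mpr hprod).congr fun x => ?_
    simp only [Function.comp_apply, Fin.consEquiv_symm_apply, Fin.prod_univ_succ]
    rfl

lemma summable_one_div_sum_sq_add_one_pow {n k : ℕ} (hnk : n < 2 * k) :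
    Summable fun x : Fin n → ℤ => 1 / (∑ i, (x i : ℝ) ^ 2 + 1) ^ k := by
  rcases n.eq_zero_or_pos with rfl | hn
  · exact Summable.of_finite
  have hn' : (0 : ℝ) < n := by exact_mod_cast hn
  set r : ℝ := k / n
  have hr : 1 / 2 < r := by
    rw [div_lt_div_iff₀ two_pos hn']
    exact_mod_cast (by omega : 1 * n < k * 2)
  refine (summable_fin_prod_of_nonneg (fun _ => Real.rpow_nonneg (by positivity) _)
    (summable_int_sq_add_one_rpow_neg hr) n).of_nonneg_of_le (fun _ => by positivity) fun x => ?_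
  set T := ∑ i, (x i : ℝ) ^ 2
  have hcoord : ∀ i, (x i : ℝ) ^ 2 + 1 ≤ T + 1 := fun i => by
    have := single_le_sum (fun j _ => sq_nonneg (x j : ℝ)) (mem_univ i)
    linarith
  have hprod : ∏ i, ((x i : ℝ) ^ 2 + 1) ≤ (T + 1) ^ n := by
    simpa using prod_le_prod (s := univ) (fun i _ => by positivity) fun i _ => hcoord i
  calc 1 / (T + 1) ^ k = ((T + 1) ^ n) ^ (-r) := by
        rw [← Real.rpow_natCast (T + 1) n, ← Real.rpow_mul (by positivity), mul_neg,
          mul_div_cancel₀ _ hn'.ne', Real.rpow_neg (by positivity), Real.rpow_natCast, one_div]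
    _ ≤ (∏ i, ((x i : ℝ) ^ 2 + 1)) ^ (-r) :=
        Real.rpow_le_rpow_of_nonpos (prod_pos fun _ _ => by positivity) hprod (by linarith)
    _ = ∏ i, ((x i : ℝ) ^ 2 + 1) ^ (-r) :=
        (Real.finsetProd_rpow _ _ (fun _ _ => by positivity) _).symm

lemma abs_symmetrized_inv_sub_taylor_le {a u v : ℝ} (ha : 0 < a) (hv : 0 ≤ v)
    (hu : 2 * u ^ 2 ≤ v * a) :
    |(1 / 2) * (1 / (a + 2 * u + v) + 1 / (a - 2 * u + v)) - 1 / a + v / a ^ 2 - 4 * u ^ 2 / a ^ 3|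
      ≤ 4 * v ^ 2 * (11 * a + 3 * v) / a ^ 4 := by
  -- 16 u² ≤ 8 v a ≤ (a + 2 v)², so |u| ≤ (a + 2 v) / 4
  have hP : a / 2 ≤ a + 2 * u + v := by nlinarith [sq_nonneg (a - 2 * v)]
  have hQ : a / 2 ≤ a - 2 * u + v := by nlinarith [sq_nonneg (a - 2 * v)]
  have hPQ : 0 < (a + 2 * u + v) * (a - 2 * u + v) := by
    have := mul_le_mul hP hQ (by positivity) (by linarith)
    nlinarith
  set N := a ^ 2 * v ^ 2 + a * v ^ 3 - 12 * a * v * u ^ 2 - 4 * v ^ 2 * u ^ 2 + 16 * u ^ 4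
  have hid : (1 / 2) * (1 / (a + 2 * u + v) + 1 / (a - 2 * u + v)) - 1 / a + v / a ^ 2
      - 4 * u ^ 2 / a ^ 3 = N / (a ^ 3 * ((a + 2 * u + v) * (a - 2 * u + v))) := by
    have : a + 2 * u + v ≠ 0 := by linarith
    have : a - 2 * u + v ≠ 0 := by linarith
    field_simp
    ring
  have hN : |N| ≤ a * v ^ 2 * (11 * a + 3 * v) := by
    rw [abs_le]
    constructor <;> nlinarith [mul_le_mul_of_nonneg_left hu (mul_nonneg ha.le hv),
      mul_le_mul_of_nonneg_left hu (mul_nonneg hv hv),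
      mul_le_mul hu hu (by positivity) (by positivity)]
  rw [hid, abs_div,
    abs_of_pos (show 0 < a ^ 3 * ((a + 2 * u + v) * (a - 2 * u + v)) by positivity)]
  calc |N| / (a ^ 3 * ((a + 2 * u + v) * (a - 2 * u + v)))
      ≤ a * v ^ 2 * (11 * a + 3 * v) / (a ^ 3 * ((a / 2) * (a / 2))) := by
        gcongr
        linarith
    _ = 4 * v ^ 2 * (11 * a + 3 * v) / a ^ 4 := by
        field_simp
        ring

section Propagator

variable (m : ℝ) (q : Fin 4 → ℤ)

lemma A_eq_A_zero_add (p : ℤ) :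
    A m p q = A m 0 q + 2 * p * ∑ i, (q i : ℝ) + 2 * (p : ℝ) ^ 2 := by
  simp only [A]
  push_cast
  ring

lemma A_neg_eq_A_zero_sub (p : ℤ) :
    A m p (-q) = A m 0 q - 2 * p * ∑ i, (q i : ℝ) + 2 * (p : ℝ) ^ 2 := by
  simp only [A, Pi.neg_apply, Int.cast_neg, neg_sq, sum_neg_distrib]
  push_cast
  ring

lemma A_zero_eq : A m 0 q = ∑ i, (q i : ℝ) ^ 2 + (∑ i, (q i : ℝ)) ^ 2 + m ^ 2 := by
  simp [A]

lemma sq_sum_le_A_zero : (∑ i, (q i : ℝ)) ^ 2 ≤ A m 0 q := by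
  have := sum_nonneg fun i (_ : i ∈ univ) => sq_nonneg (q i : ℝ)
  rw [A_zero_eq]
  nlinarith [sq_nonneg m]

lemma sq_le_A_zero : m ^ 2 ≤ A m 0 q := by
  have := sum_nonneg fun i (_ : i ∈ univ) => sq_nonneg (q i : ℝ)
  rw [A_zero_eq]
  nlinarith [sq_nonneg (∑ i, (q i : ℝ))]

lemma min_one_sq_mul_le_A_zero : min 1 (m ^ 2) * (∑ i, (q i : ℝ) ^ 2 + 1) ≤ A m 0 q := by
  have hT := sum_nonneg fun i (_ : i ∈ univ) => sq_nonneg (q i : ℝ)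
  rw [A_zero_eq]
  nlinarith [sq_nonneg (∑ i, (q i : ℝ)), min_le_right 1 (m ^ 2),
    mul_le_mul_of_nonneg_right (min_le_left 1 (m ^ 2)) hT]

end Propagator

/-- After the symmetrization `q ↦ -q` and subtraction of the mass counterterm `1/A₀(q)` and
wave-function counterterms `2p²/A₀(q)²` and `4p²S(q)²/A₀(q)³`, the one-loop melonic
self-energy is UV finite. -/
theorem renormalized_self_energy_summable (m : ℝ) (hm : 0 < m) (p : ℤ) :
    Summable (fun q : Fin 4 → ℤ =>
      (1 / 2) * (1 / A m p q + 1 / A m p (-q)) - 1 / A m 0 q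
        + 2 * (p : ℝ) ^ 2 / (A m 0 q) ^ 2
        - 4 * (p : ℝ) ^ 2 * (∑ i, (q i : ℝ)) ^ 2 / (A m 0 q) ^ 3) := by
  set μ := min 1 (m ^ 2)
  have hμ : 0 < μ := lt_min one_pos (by positivity)
  set v : ℝ := 2 * (p : ℝ) ^ 2 with hv
  refine ((summable_one_div_sum_sq_add_one_pow (n := 4) (k := 3) (by norm_num)).mul_left
    (4 * v ^ 2 * (11 + 3 * v / m ^ 2) / μ ^ 3)).of_norm_bounded fun q => ?_
  rw [Real.norm_eq_abs, A_eq_A_zero_add, A_neg_eq_A_zero_sub, ← hv]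
  set a := A m 0 q
  set s := ∑ i, (q i : ℝ)
  have hma : m ^ 2 ≤ a := sq_le_A_zero m q
  have ha : 0 < a := lt_of_lt_of_le (by positivity) hma
  have hu : 2 * (p * s) ^ 2 ≤ v * a := by
    nlinarith [mul_le_mul_of_nonneg_left (sq_sum_le_A_zero m q) (sq_nonneg (p : ℝ))]
  have hmain := abs_symmetrized_inv_sub_taylor_le ha (by positivity) hu
  calc _ = |(1 / 2) * (1 / (a + 2 * (p * s) + v) + 1 / (a - 2 * (p * s) + v)) - 1 / a + v / a ^ 2
          - 4 * (p * s) ^ 2 / a ^ 3| := by ring_nf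
    _ ≤ 4 * v ^ 2 * (11 * a + 3 * v) / a ^ 4 := hmain
    _ = 4 * v ^ 2 * (11 + 3 * v / a) / a ^ 3 := by field_simp
    _ ≤ 4 * v ^ 2 * (11 + 3 * v / m ^ 2) / (μ * (∑ i, (q i : ℝ) ^ 2 + 1)) ^ 3 := by
        gcongr
        exact min_one_sq_mul_le_A_zero m q
    _ = _ := by rw [mul_pow μ, div_mul_div_comm, mul_one]
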